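/- Let x ∈ ℝ^m have support N := {i : x_i ≠ 0}, let T ⊆ {1,…,m} with Δ := N \ T nonempty, and let y = A x + w with ‖w‖₂ ≤ ε. Assume |T| ≤ S_T and |Δ| ≤ S_Δ. Let b := max_{i∈Δ}|x_i|, fix γ ∈ (0,1], let Δ₁ := {i ∈ Δ : |x_i| ≥ γ·b} and Δ₂ := Δ \ Δ₁, and assume |Δ₁| ≤ S_{Δ1} and ‖x_{Δ₂}‖₂ ≤ κ·b. Let x̂_init be the LS estimate on T from y, ỹ := y − A·x̂_init, β̂ any minimizer of ‖β‖₁ over {β ∈ ℝ^m : ‖ỹ − Aβ‖₂ ≤ ε}, and x̂_CSres := x̂_init + β̂. Suppose some δ < (√2 − 1)/2 is a 2S_Δ-restricted isometry bound for A, some δ′ < 1/2 is an S_T-restricted isometry bound for A, and θ is an (S_T, S_Δ)-restricted orthogonality bound for A. Set C′ := C₁(δ) + √2·C₂(δ)·√(S_T/|Δ|) and C″ := 2·C₂(δ)·√S_T. If θ·C″ ≤ γ/(2(√S_{Δ1} + κ)) and α_add + C′·ε < (γ − θ·C″·(√S_{Δ1} + κ))·b, then every i ∈ Δ₁ satisfies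 |x̂_{CSres,i}| > α_add, i.e., every element of Δ₁ is detected by the threshold-α_add addition step. -/

import Mathlib

open Finset

attribute [local instance] Classical.propDecidable

/-- Euclidean (ℓ2) norm of a finite real vector. -/
noncomputable def norm2 {k : ℕ} (v : Fin k → ℝ) : ℝ := Real.sqrt (∑ i, v i ^ 2)

/-- ℓ∞ norm (maximum absolute entry) of a finite real vector. -/
noncomputable def normInf {k : ℕ} (v : Fin k → ℝ) : ℝ := ⨆ i, |v i|

/-- Support of a vector, as a finset. -/
noncomputable def spt {k : ℕ} (v : Fin k → ℝ) : Finset (Fin k) :=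
  Finset.univ.filter (fun i => v i ≠ 0)

/-- Restriction of a vector to the coordinates indexed by `T` (zero elsewhere). -/
noncomputable def restr {k : ℕ} (T : Finset (Fin k)) (v : Fin k → ℝ) : Fin k → ℝ :=
  fun i => if i ∈ T then v i else 0

/-- `δ ∈ [0,1)` is an `S`-restricted isometry bound for `A`:
`(1-δ)‖z‖² ≤ ‖Az‖² ≤ (1+δ)‖z‖²` for every `z` with at most `S` nonzero entries. -/
def RIPBound {n m : ℕ} (A : Matrix (Fin n) (Fin m) ℝ) (S : ℕ) (δ : ℝ) : Prop :=
  0 ≤ δ ∧ δ < 1 ∧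
    ∀ z : Fin m → ℝ, (spt z).card ≤ S →
      (1 - δ) * (∑ i, z i ^ 2) ≤ (∑ j, (A.mulVec z) j ^ 2) ∧
      (∑ j, (A.mulVec z) j ^ 2) ≤ (1 + δ) * (∑ i, z i ^ 2)

/-- `θ ≥ 0` is an `(S,S')`-restricted orthogonality bound for `A`:
`|⟨Az, Az'⟩| ≤ θ‖z‖‖z'‖` for all `z, z'` with disjoint supports of cardinalities `≤ S, S'`. -/
def ROBound {n m : ℕ} (A : Matrix (Fin n) (Fin m) ℝ) (S S' : ℕ) (θ : ℝ) : Prop :=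
  0 ≤ θ ∧
    ∀ z z' : Fin m → ℝ, Disjoint (spt z) (spt z') →
      (spt z).card ≤ S → (spt z').card ≤ S' →
      |∑ j, (A.mulVec z) j * (A.mulVec z') j| ≤ θ * norm2 z * norm2 z'

/-- A modified-CS estimate with known part `T`: feasible and with minimal ℓ1 norm outside `T`
among all feasible vectors. -/
def ModCS {n m : ℕ} (A : Matrix (Fin n) (Fin m) ℝ) (y : Fin n → ℝ) (ε : ℝ)
    (T : Finset (Fin m)) (xhat : Fin m → ℝ) : Prop :=
  norm2 (fun j => y j - (A.mulVec xhat) j) ≤ ε ∧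
    ∀ β : Fin m → ℝ, norm2 (fun j => y j - (A.mulVec β) j) ≤ ε →
      ∑ i ∈ Tᶜ, |xhat i| ≤ ∑ i ∈ Tᶜ, |β i|

/-- The LS estimate on `T` from `y`: supported on `T` and satisfying the normal equations
`A_Tᵀ (y - A x̂) = 0` (equivalently `x̂_T = (A_Tᵀ A_T)⁻¹ A_Tᵀ y` when `A_T` has
full column rank). -/
def IsLS {n m : ℕ} (A : Matrix (Fin n) (Fin m) ℝ) (y : Fin n → ℝ)
    (T : Finset (Fin m)) (xhat : Fin m → ℝ) : Prop :=
  (∀ i, i ∉ T → xhat i = 0) ∧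
    ∀ i ∈ T, (∑ j, A j i * (y j - (A.mulVec xhat) j)) = 0

/-- `C₁(δ) = 4√(1+δ)/(1-(√2+1)δ)`. -/
noncomputable def C1 (δ : ℝ) : ℝ := 4 * Real.sqrt (1 + δ) / (1 - (Real.sqrt 2 + 1) * δ)

/-- `C₂(δ) = 2(1+(√2-1)δ)/(1-(√2+1)δ)`. -/
noncomputable def C2 (δ : ℝ) : ℝ := 2 * (1 + (Real.sqrt 2 - 1) * δ) / (1 - (Real.sqrt 2 + 1) * δ)

/-!
Write `β = x - x̂_init` and `Δ = N \ T`. As `x̂_init` vanishes off `T`, `β = β_T + x_Δ`, and the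
normal equations make `A β_T` orthogonal to `A β_T + A x_Δ + w`; restricted isometry on `T` and
restricted orthogonality between `T` and `Δ` turn this into `‖β_T‖₂ ≤ 2θ‖x_Δ‖₂ + √2 ε`.

The vector `β` is feasible for the `ℓ₁` program with data `ỹ = A β + w`, so Candès' argument
(cone condition, then cutting `Δᶜ` into blocks of `|Δ|` decreasing entries) bounds
`‖β̂ - β‖₂ ≤ C₁ ε + C₂ ‖β_{Δᶜ}‖₁ / √|Δ|`, with `‖β_{Δᶜ}‖₁ ≤ ‖β_T‖₁ ≤ √S_T ‖β_T‖₂`.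
Since `x̂_CSres - x = β̂ - β`, every `i ∈ Δ₁` has `|x̂_CSres,i| ≥ γ b - ‖β̂ - β‖₂`, and the
detection hypothesis, together with `‖x_Δ‖₂ ≤ (√S_Δ1 + κ) b`, makes this exceed `α_add`.
-/

open Finset Matrix

section Norm2

variable {k : ℕ}

lemma norm2_nonneg (v : Fin k → ℝ) : 0 ≤ norm2 v := Real.sqrt_nonneg _

lemma sq_norm2 (v : Fin k → ℝ) : norm2 v ^ 2 = ∑ i, v i ^ 2 :=
  Real.sq_sqrt (sum_nonneg fun i _ => sq_nonneg (v i))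

lemma sq_norm2_eq_dotProduct (v : Fin k → ℝ) : norm2 v ^ 2 = v ⬝ᵥ v := by
  rw [sq_norm2]
  simp only [dotProduct, sq]

lemma norm2_eq_norm_toLp (v : Fin k → ℝ) : norm2 v = ‖WithLp.toLp 2 v‖ := by
  simp [norm2, EuclideanSpace.norm_eq]

lemma norm2_add_le (u v : Fin k → ℝ) : norm2 (u + v) ≤ norm2 u + norm2 v := by
  simpa only [norm2_eq_norm_toLp, WithLp.toLp_add] using norm_add_le _ _

lemma norm2_sub_le (u v : Fin k → ℝ) : norm2 (u - v) ≤ norm2 u + norm2 v := by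
  simpa only [norm2_eq_norm_toLp, WithLp.toLp_sub] using norm_sub_le _ _

lemma eq_zero_of_norm2_eq_zero {v : Fin k → ℝ} (h : norm2 v = 0) : v = 0 := by
  rw [norm2_eq_norm_toLp, norm_eq_zero] at h
  exact (WithLp.toLp_eq_zero 2).mp h

lemma abs_le_norm2 (v : Fin k → ℝ) (i : Fin k) : |v i| ≤ norm2 v := by
  rw [← Real.sqrt_sq_eq_abs]
  exact Real.sqrt_le_sqrt (single_le_sum (f := fun j => v j ^ 2) (fun j _ => sq_nonneg _)
    (mem_univ i))

lemma abs_dotProduct_le_norm2_mul (u v : Fin k → ℝ) : |u ⬝ᵥ v| ≤ norm2 u * norm2 v := by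
  rw [← Real.sqrt_sq_eq_abs, norm2, norm2, ← Real.sqrt_mul (sum_nonneg fun i _ => sq_nonneg _)]
  exact Real.sqrt_le_sqrt (sum_mul_sq_le_sq_mul_sq _ _ _)

lemma norm2_le_of_sq_le {v : Fin k → ℝ} {c : ℝ} (hc : 0 ≤ c) (h : norm2 v ^ 2 ≤ c ^ 2) :
    norm2 v ≤ c :=
  (pow_le_pow_iff_left₀ (norm2_nonneg v) hc two_ne_zero).mp h

end Norm2

section Restriction

variable {k : ℕ}

lemma restr_apply_of_mem {B : Finset (Fin k)} (v : Fin k → ℝ) {i : Fin k} (h : i ∈ B) :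
    restr B v i = v i := if_pos h

lemma restr_apply_of_notMem {B : Finset (Fin k)} (v : Fin k → ℝ) {i : Fin k} (h : i ∉ B) :
    restr B v i = 0 := if_neg h

lemma mem_spt {v : Fin k → ℝ} {i : Fin k} : i ∈ spt v ↔ v i ≠ 0 := by
  simp [spt]

lemma spt_restr_subset (B : Finset (Fin k)) (v : Fin k → ℝ) : spt (restr B v) ⊆ B := by
  intro i hi
  by_contra hiB
  exact mem_spt.mp hi (restr_apply_of_notMem v hiB)

lemma card_spt_restr_le (B : Finset (Fin k)) (v : Fin k → ℝ) : #(spt (restr B v)) ≤ #B :=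
  card_le_card (spt_restr_subset B v)

lemma restr_union {B C : Finset (Fin k)} (h : Disjoint B C) (v : Fin k → ℝ) :
    restr (B ∪ C) v = restr B v + restr C v := by
  funext i
  by_cases hB : i ∈ B
  · simp [restr, hB, disjoint_left.mp h hB]
  · by_cases hC : i ∈ C <;> simp [restr, hB, hC]

lemma restr_eq_self {B : Finset (Fin k)} {v : Fin k → ℝ} (h : spt v ⊆ B) : restr B v = v := by
  funext i
  by_cases hi : i ∈ B
  · exact restr_apply_of_mem v hi
  · rw [restr_apply_of_notMem v hi]
    by_contra hv
    exact hi (h (mem_spt.mpr (Ne.symm hv)))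

lemma sq_norm2_restr (B : Finset (Fin k)) (v : Fin k → ℝ) :
    norm2 (restr B v) ^ 2 = ∑ i ∈ B, v i ^ 2 := by
  rw [sq_norm2, ← sum_subset (subset_univ B) fun i _ hi => by simp [restr_apply_of_notMem v hi]]
  exact sum_congr rfl fun i hi => by rw [restr_apply_of_mem v hi]

lemma norm2_restr_le_of_subset {B C : Finset (Fin k)} (hBC : B ⊆ C) (v : Fin k → ℝ) :
    norm2 (restr B v) ≤ norm2 (restr C v) := by
  refine norm2_le_of_sq_le (norm2_nonneg _) ?_
  rw [sq_norm2_restr, sq_norm2_restr]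
  exact sum_le_sum_of_subset_of_nonneg hBC fun i _ _ => sq_nonneg _

lemma norm2_restr_add_norm2_restr_le {B C : Finset (Fin k)} (hBC : Disjoint B C)
    (v : Fin k → ℝ) : norm2 (restr B v) + norm2 (restr C v) ≤ √2 * norm2 (restr (B ∪ C) v) := by
  refine abs_le_of_sq_le_sq' ?_ (mul_nonneg (Real.sqrt_nonneg _) (norm2_nonneg _)) |>.2
  rw [mul_pow, Real.sq_sqrt zero_le_two, sq_norm2_restr, sum_union hBC, ← sq_norm2_restr,
    ← sq_norm2_restr]
  nlinarith [sq_nonneg (norm2 (restr B v) - norm2 (restr C v))]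

lemma sum_abs_le_sqrt_card_mul_norm2_restr (B : Finset (Fin k)) (v : Fin k → ℝ) :
    ∑ i ∈ B, |v i| ≤ √(#B : ℝ) * norm2 (restr B v) := by
  refine abs_le_of_sq_le_sq' ?_ (mul_nonneg (Real.sqrt_nonneg _) (norm2_nonneg _)) |>.2
  rw [mul_pow, Real.sq_sqrt (Nat.cast_nonneg _), sq_norm2_restr]
  simpa only [sq_abs] using sq_sum_le_card_mul_sum_sq (s := B) (f := fun i => |v i|)

lemma norm2_restr_le_of_abs_le {B : Finset (Fin k)} {v : Fin k → ℝ} {c : ℝ} (hc : 0 ≤ c)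
    (h : ∀ i ∈ B, |v i| ≤ c) : norm2 (restr B v) ≤ √(#B : ℝ) * c := by
  refine norm2_le_of_sq_le (by positivity) ?_
  rw [sq_norm2_restr, mul_pow, Real.sq_sqrt (Nat.cast_nonneg _), ← nsmul_eq_mul, ← sum_const]
  exact sum_le_sum fun i hi => by
    simpa only [sq_abs] using pow_le_pow_left₀ (abs_nonneg _) (h i hi) 2

lemma norm2_restr_le_of_subset_of_abs_le {Δ₁ Δ : Finset (Fin k)} (hΔ₁ : Δ₁ ⊆ Δ)
    {v : Fin k → ℝ} {b κ : ℝ} {S₁ : ℕ} (hb : 0 ≤ b) (hle : ∀ i ∈ Δ₁, |v i| ≤ b)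
    (hcard : #Δ₁ ≤ S₁) (hrest : norm2 (restr (Δ \ Δ₁) v) ≤ κ * b) :
    norm2 (restr Δ v) ≤ (√(S₁ : ℝ) + κ) * b := by
  rw [← union_sdiff_of_subset hΔ₁, restr_union disjoint_sdiff]
  refine (norm2_add_le _ _).trans ?_
  have h₁ := norm2_restr_le_of_abs_le hb hle
  have h₂ : √(#Δ₁ : ℝ) * b ≤ √(S₁ : ℝ) * b :=
    mul_le_mul_of_nonneg_right (Real.sqrt_le_sqrt (by exact_mod_cast hcard)) hb
  linarith

end Restriction

section Isometry

variable {n m : ℕ} {A : Matrix (Fin n) (Fin m) ℝ} {S : ℕ} {δ : ℝ}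

lemma dotProduct_eq_zero_of_disjoint_spt {u v : Fin m → ℝ} (h : Disjoint (spt u) (spt v)) :
    u ⬝ᵥ v = 0 := by
  refine sum_eq_zero fun i _ => ?_
  by_cases hu : u i = 0
  · rw [hu, zero_mul]
  · have hv : v i = 0 := not_not.mp fun hv => disjoint_left.mp h (mem_spt.mpr hu) (mem_spt.mpr hv)
    rw [hv, mul_zero]

lemma spt_smul_add_smul_subset (a b : ℝ) (u v : Fin m → ℝ) :
    spt (a • u + b • v) ⊆ spt u ∪ spt v := by
  intro i hi
  rw [mem_union, mem_spt, mem_spt]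
  by_contra! h
  simp [mem_spt, h.1, h.2] at hi

namespace RIPBound

lemma le_sq_norm2_mulVec (hA : RIPBound A S δ) {z : Fin m → ℝ} (hz : #(spt z) ≤ S) :
    (1 - δ) * norm2 z ^ 2 ≤ norm2 (A *ᵥ z) ^ 2 := by
  rw [sq_norm2, sq_norm2]
  exact (hA.2.2 z hz).1

lemma sq_norm2_mulVec_le (hA : RIPBound A S δ) {z : Fin m → ℝ} (hz : #(spt z) ≤ S) :
    norm2 (A *ᵥ z) ^ 2 ≤ (1 + δ) * norm2 z ^ 2 := by
  rw [sq_norm2, sq_norm2]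
  exact (hA.2.2 z hz).2

lemma norm2_mulVec_le (hA : RIPBound A S δ) {z : Fin m → ℝ} (hz : #(spt z) ≤ S) :
    norm2 (A *ᵥ z) ≤ √(1 + δ) * norm2 z := by
  refine norm2_le_of_sq_le (mul_nonneg (Real.sqrt_nonneg _) (norm2_nonneg z)) ?_
  rw [mul_pow, Real.sq_sqrt (by linarith [hA.1])]
  exact hA.sq_norm2_mulVec_le hz

lemma abs_dotProduct_mulVec_le (hA : RIPBound A S δ) {u v : Fin m → ℝ}
    (huv : Disjoint (spt u) (spt v)) (hS : #(spt u) + #(spt v) ≤ S) :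
    |(A *ᵥ u) ⬝ᵥ (A *ᵥ v)| ≤ δ * norm2 u * norm2 v := by
  set X := (A *ᵥ u) ⬝ᵥ (A *ᵥ v)
  -- polarization with `b • u ± a • v`, where `a = ‖u‖`, `b = ‖v‖`: both have squared norm `2 a² b²`
  obtain ⟨a, ha⟩ : ∃ a, norm2 u = a := ⟨_, rfl⟩
  obtain ⟨b, hb⟩ : ∃ b, norm2 v = b := ⟨_, rfl⟩
  have hcard (c : ℝ) : #(spt (b • u + c • v)) ≤ S :=
    (card_le_card (spt_smul_add_smul_subset _ _ _ _)).trans ((card_union_le _ _).trans hS)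
  have hsq (c : ℝ) : norm2 (b • u + c • v) ^ 2 = b ^ 2 * a ^ 2 + c ^ 2 * b ^ 2 := by
    rw [sq_norm2_eq_dotProduct]
    simp only [add_dotProduct, dotProduct_add, smul_dotProduct, dotProduct_smul,
      dotProduct_comm v u, dotProduct_eq_zero_of_disjoint_spt huv, smul_eq_mul]
    rw [← sq_norm2_eq_dotProduct u, ← sq_norm2_eq_dotProduct v, ha, hb]
    ring
  have hAsq (c : ℝ) : norm2 (A *ᵥ (b • u + c • v)) ^ 2 =
      b ^ 2 * norm2 (A *ᵥ u) ^ 2 + 2 * b * c * X + c ^ 2 * norm2 (A *ᵥ v) ^ 2 := by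
    simp only [sq_norm2_eq_dotProduct, mulVec_add, mulVec_smul, add_dotProduct, dotProduct_add,
      smul_dotProduct, dotProduct_smul, dotProduct_comm (A *ᵥ v) (A *ᵥ u), X, smul_eq_mul]
    ring
  have hp := hA.sq_norm2_mulVec_le (hcard a)
  have hq := hA.le_sq_norm2_mulVec (hcard (-a))
  have hp' := hA.le_sq_norm2_mulVec (hcard a)
  have hq' := hA.sq_norm2_mulVec_le (hcard (-a))
  rw [hsq, hAsq] at hp hq hp' hq'
  have hab : a * b * |X| ≤ a * b * (δ * a * b) := by
    rcases abs_cases X with ⟨hX, -⟩ | ⟨hX, -⟩ <;> rw [hX] <;> nlinarith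
  rw [ha, hb]
  have ha0 : 0 ≤ a := ha ▸ norm2_nonneg u
  have hb0 : 0 ≤ b := hb ▸ norm2_nonneg v
  have hδab : 0 ≤ δ * a * b := mul_nonneg (mul_nonneg hA.1 ha0) hb0
  rcases (mul_nonneg ha0 hb0).eq_or_lt with h0 | hpos
  · rcases mul_eq_zero.mp h0.symm with h | h
    · simpa [X, eq_zero_of_norm2_eq_zero (ha.trans h)] using hδab
    · simpa [X, eq_zero_of_norm2_eq_zero (hb.trans h)] using hδab
  · exact le_of_mul_le_mul_left hab hpos

end RIPBound

end Isometry

lemma sqrt_mul_div_self_eq_div_sqrt (a x : ℝ) : √x * (a / x) = a / √x := by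
  rw [mul_div_left_comm, Real.sqrt_div_self', mul_one_div]

lemma Finset.exists_subset_card_eq_min_of_le {α β : Type*} [DecidableEq α] [LinearOrder β]
    (f : α → β) (s : ℕ) (R : Finset α) :
    ∃ B ⊆ R, #B = min s #R ∧ ∀ i ∈ B, ∀ j ∈ R \ B, f j ≤ f i := by
  induction s generalizing R with
  | zero => exact ⟨∅, empty_subset R, by simp, by simp⟩
  | succ s ih =>
    rcases R.eq_empty_or_nonempty with rfl | hR
    · exact ⟨∅, empty_subset _, by simp, by simp⟩
    obtain ⟨i₀, hi₀, hmax⟩ := exists_max_image R f hR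
    obtain ⟨B, hBR, hBcard, hBtop⟩ := ih (R.erase i₀)
    have hi₀B : i₀ ∉ B := fun h => (mem_erase.mp (hBR h)).1 rfl
    refine ⟨insert i₀ B, insert_subset hi₀ (hBR.trans (erase_subset _ _)), ?_, ?_⟩
    · rw [card_insert_of_notMem hi₀B, hBcard, card_erase_of_mem hi₀]
      have := card_pos.mpr hR
      omega
    · intro i hi j hj
      rw [mem_sdiff, mem_insert, not_or] at hj
      rcases mem_insert.mp hi with rfl | hi
      · exact hmax j hj.1
      · exact hBtop i hi j (mem_sdiff.mpr ⟨mem_erase.mpr ⟨hj.2.1, hj.1⟩, hj.2.2⟩)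

section SortedBlocks

variable {k : ℕ}

lemma exists_subset_card_eq_min_forall_abs_le (h : Fin k → ℝ) {s : ℕ} (hs : 0 < s)
    (R : Finset (Fin k)) :
    ∃ B ⊆ R, #B = min s #R ∧ ∀ j ∈ R \ B, |h j| ≤ (∑ i ∈ B, |h i|) / s := by
  obtain ⟨B, hBR, hBcard, hBtop⟩ := exists_subset_card_eq_min_of_le (fun i => |h i|) s R
  refine ⟨B, hBR, hBcard, fun j hj => ?_⟩
  have hBs : #B = s := by
    have : #B < #R := card_lt_card ⟨hBR, fun hRB => (mem_sdiff.mp hj).2 (hRB (mem_sdiff.mp hj).1)⟩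
    omega
  rw [le_div_iff₀ (by exact_mod_cast hs), mul_comm, ← hBs, ← nsmul_eq_mul]
  exact card_nsmul_le_sum B _ _ fun i hi => hBtop i hi j hj

/-- Cut `R` into successive blocks of the `s` largest remaining entries of `|h|`: the first block
has `ℓ₂` norm at most `√s c`, each later one at most the `ℓ₁` norm of its predecessor over `√s`. -/
theorem le_of_forall_block_le (h : Fin k → ℝ) {s : ℕ} (hs : 0 < s) (Φ : Finset (Fin k) → ℝ)
    {K : ℝ} (hK : 0 ≤ K) (R : Finset (Fin k))
    (hunion : ∀ B ⊆ R, ∀ C ⊆ R, Disjoint B C → Φ (B ∪ C) ≤ Φ B + Φ C)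
    (hblock : ∀ B ⊆ R, #B ≤ s → Φ B ≤ K * norm2 (restr B h))
    {c : ℝ} (hc0 : 0 ≤ c) (hc : ∀ j ∈ R, |h j| ≤ c) :
    Φ R ≤ K * (√(s : ℝ) * c + (∑ j ∈ R, |h j|) / √(s : ℝ)) := by
  induction R using Finset.strongInduction generalizing c with
  | H R ih =>
  have hs' : (0 : ℝ) < √(s : ℝ) := Real.sqrt_pos.mpr (by exact_mod_cast hs)
  obtain ⟨B, hBR, hBcard, hBtop⟩ := exists_subset_card_eq_min_forall_abs_le h hs R
  have hB : Φ B ≤ K * (√(s : ℝ) * c) := by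
    refine (hblock B hBR (hBcard ▸ min_le_left _ _)).trans (mul_le_mul_of_nonneg_left ?_ hK)
    refine (norm2_restr_le_of_abs_le hc0 fun i hi => hc i (hBR hi)).trans ?_
    exact mul_le_mul_of_nonneg_right
      (Real.sqrt_le_sqrt (by exact_mod_cast hBcard ▸ min_le_left _ _)) hc0
  rcases (R \ B).eq_empty_or_nonempty with hrest | ⟨j, hj⟩
  · rw [subset_antisymm hBR (sdiff_eq_empty_iff_subset.mp hrest)] at hB
    have hsumR : 0 ≤ (∑ j ∈ R, |h j|) / √(s : ℝ) :=
      div_nonneg (sum_nonneg fun _ _ => abs_nonneg _) hs'.le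
    exact hB.trans (mul_le_mul_of_nonneg_left (le_add_of_nonneg_right hsumR) hK)
  have hBne : B.Nonempty := by
    rw [← card_pos, hBcard]
    exact lt_min hs (card_pos.mpr ⟨j, (mem_sdiff.mp hj).1⟩)
  have hIH := ih (R \ B) (sdiff_ssubset hBR hBne)
    (fun B' hB' C hC => hunion B' (hB'.trans sdiff_subset) C (hC.trans sdiff_subset))
    (fun B' hB' => hblock B' (hB'.trans sdiff_subset)) ((abs_nonneg _).trans (hBtop j hj)) hBtop
  calc Φ R = Φ (B ∪ R \ B) := by rw [union_sdiff_of_subset hBR]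
    _ ≤ Φ B + Φ (R \ B) := hunion B hBR _ sdiff_subset disjoint_sdiff
    _ ≤ K * (√(s : ℝ) * c) +
        K * ((∑ i ∈ B, |h i|) / √(s : ℝ) + (∑ j ∈ R \ B, |h j|) / √(s : ℝ)) := by
      rw [← sqrt_mul_div_self_eq_div_sqrt]; exact add_le_add hB hIH
    _ = K * (√(s : ℝ) * c + (∑ j ∈ R, |h j|) / √(s : ℝ)) := by
      rw [← sum_sdiff hBR]; ring

end SortedBlocks

section L1Recovery

variable {n m : ℕ} {A : Matrix (Fin n) (Fin m) ℝ} {S : ℕ} {δ : ℝ}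

lemma sum_compl_abs_sub_le_of_sum_abs_le {β' β : Fin m → ℝ} (hl1 : ∑ i, |β' i| ≤ ∑ i, |β i|)
    (T₀ : Finset (Fin m)) :
    ∑ i ∈ T₀ᶜ, |(β' - β) i| ≤ ∑ i ∈ T₀, |(β' - β) i| + 2 * ∑ i ∈ T₀ᶜ, |β i| := by
  have hT₀ : ∑ i ∈ T₀, |β i| ≤ ∑ i ∈ T₀, |β' i| + ∑ i ∈ T₀, |(β' - β) i| := by
    rw [← sum_add_distrib]
    refine sum_le_sum fun i _ => ?_
    have := abs_sub_abs_le_abs_sub (β i) (β' i)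
    rw [abs_sub_comm] at this
    simp only [Pi.sub_apply]
    linarith
  have hT₀c : ∑ i ∈ T₀ᶜ, |(β' - β) i| ≤ ∑ i ∈ T₀ᶜ, |β' i| + ∑ i ∈ T₀ᶜ, |β i| := by
    rw [← sum_add_distrib]
    exact sum_le_sum fun i _ => abs_sub _ _
  linarith [sum_add_sum_compl T₀ fun i => |β i|, sum_add_sum_compl T₀ fun i => |β' i|]

lemma RIPBound.abs_dotProduct_mulVec_restr_le (hA : RIPBound A S δ) (v : Fin m → ℝ)
    {B C : Finset (Fin m)} (hBC : Disjoint B C) (hS : #B + #C ≤ S) :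
    |(A *ᵥ restr B v) ⬝ᵥ (A *ᵥ restr C v)| ≤ δ * norm2 (restr B v) * norm2 (restr C v) :=
  hA.abs_dotProduct_mulVec_le
    (disjoint_of_subset_left (spt_restr_subset _ _)
      (disjoint_of_subset_right (spt_restr_subset _ _) hBC))
    ((add_le_add (card_spt_restr_le _ _) (card_spt_restr_le _ _)).trans hS)

lemma RIPBound.abs_dotProduct_mulVec_restr_union_le (hA : RIPBound A (2 * S) δ) (h : Fin m → ℝ)
    {s : ℕ} (hs : 0 < s) (hsS : s ≤ S) {T₀ T₁ U : Finset (Fin m)} (hT₀ : #T₀ ≤ s) (hT₁ : #T₁ ≤ s)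
    (hT₀T₁ : Disjoint T₀ T₁) (hT₀U : Disjoint T₀ U) (hT₁U : Disjoint T₁ U) {c : ℝ} (hc0 : 0 ≤ c)
    (hc : ∀ j ∈ U, |h j| ≤ c) :
    |(A *ᵥ restr (T₀ ∪ T₁) h) ⬝ᵥ (A *ᵥ restr U h)| ≤
      √2 * δ * norm2 (restr (T₀ ∪ T₁) h) * (√(s : ℝ) * c + (∑ j ∈ U, |h j|) / √(s : ℝ)) := by
  refine le_of_forall_block_le h hs (fun B => |(A *ᵥ restr (T₀ ∪ T₁) h) ⬝ᵥ (A *ᵥ restr B h)|)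
    (mul_nonneg (mul_nonneg (Real.sqrt_nonneg 2) hA.1) (norm2_nonneg _)) U
    (fun B _ C _ hBC => ?_) (fun B hB hBs => ?_) hc0 hc
  · rw [restr_union hBC, mulVec_add, dotProduct_add]
    exact abs_add_le _ _
  · have h₀ := hA.abs_dotProduct_mulVec_restr_le h (disjoint_of_subset_right hB hT₀U) (by omega)
    have h₁ := hA.abs_dotProduct_mulVec_restr_le h (disjoint_of_subset_right hB hT₁U) (by omega)
    have h₀₁ := mul_le_mul_of_nonneg_left (norm2_restr_add_norm2_restr_le hT₀T₁ h)
      (mul_nonneg hA.1 (norm2_nonneg (restr B h)))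
    have hsplit : A *ᵥ restr (T₀ ∪ T₁) h = A *ᵥ restr T₀ h + A *ᵥ restr T₁ h := by
      rw [restr_union hT₀T₁, mulVec_add]
    rw [hsplit, add_dotProduct]
    refine (abs_add_le _ _).trans ?_
    nlinarith

lemma RIPBound.mul_sq_norm2_le (hA : RIPBound A S δ) {u : Fin m → ℝ} (hu : #(spt u) ≤ S)
    (v : Fin m → ℝ) :
    (1 - δ) * norm2 u ^ 2 ≤
      √(1 + δ) * norm2 u * norm2 (A *ᵥ (u + v)) + |(A *ᵥ u) ⬝ᵥ (A *ᵥ v)| := by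
  calc (1 - δ) * norm2 u ^ 2 ≤ norm2 (A *ᵥ u) ^ 2 := hA.le_sq_norm2_mulVec hu
    _ = (A *ᵥ u) ⬝ᵥ (A *ᵥ (u + v)) - (A *ᵥ u) ⬝ᵥ (A *ᵥ v) := by
      rw [sq_norm2_eq_dotProduct, mulVec_add, dotProduct_add, add_sub_cancel_right]
    _ ≤ norm2 (A *ᵥ u) * norm2 (A *ᵥ (u + v)) + |(A *ᵥ u) ⬝ᵥ (A *ᵥ v)| := by
      linarith [le_abs_self ((A *ᵥ u) ⬝ᵥ (A *ᵥ (u + v))), neg_abs_le ((A *ᵥ u) ⬝ᵥ (A *ᵥ v)),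
        abs_dotProduct_le_norm2_mul (A *ᵥ u) (A *ᵥ (u + v))]
    _ ≤ _ := add_le_add
      (mul_le_mul_of_nonneg_right (hA.norm2_mulVec_le hu) (norm2_nonneg _)) le_rfl

lemma two_mul_add_le_C1_mul_add_C2_mul {δ ε E X : ℝ} (hδ0 : 0 ≤ δ) (hδ : (√2 + 1) * δ < 1)
    (hε : 0 ≤ ε) (hE : 0 ≤ E) (hX : 0 ≤ X)
    (hquad : (1 - δ) * X ^ 2 ≤ √(1 + δ) * X * (2 * ε) + √2 * δ * X * (X + 2 * E)) :
    2 * X + 2 * E ≤ C1 δ * ε + C2 δ * E := by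
  have hd : 0 < 1 - (√2 + 1) * δ := by linarith
  have hlin : (1 - (√2 + 1) * δ) * X ≤ 2 * √(1 + δ) * ε + 2 * √2 * δ * E := by
    rcases hX.eq_or_lt with rfl | hXpos
    · rw [mul_zero]; positivity
    · refine le_of_mul_le_mul_right ?_ hXpos
      nlinarith
  rw [C1, C2, div_mul_eq_mul_div, div_mul_eq_mul_div, ← add_div, le_div_iff₀ hd]
  nlinarith

/-- Candès' `ℓ₁`-recovery bound. -/
theorem RIPBound.norm2_sub_le_of_sum_abs_le (hA : RIPBound A (2 * S) δ) (hδ : (√2 + 1) * δ < 1)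
    {β' β : Fin m → ℝ} {ε : ℝ} (hAh : norm2 (A *ᵥ (β' - β)) ≤ 2 * ε)
    (hl1 : ∑ i, |β' i| ≤ ∑ i, |β i|) {T₀ : Finset (Fin m)} (hT₀ : T₀.Nonempty) (hS : #T₀ ≤ S) :
    norm2 (β' - β) ≤ C1 δ * ε + C2 δ * (∑ i ∈ T₀ᶜ, |β i|) / √(#T₀ : ℝ) := by
  set h := β' - β
  set s := #T₀
  set E := (∑ i ∈ T₀ᶜ, |β i|) / √(s : ℝ)
  have hs : 0 < s := card_pos.mpr hT₀
  have hs' : (0 : ℝ) < √(s : ℝ) := Real.sqrt_pos.mpr (by exact_mod_cast hs)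
  have hE : 0 ≤ E := div_nonneg (sum_nonneg fun _ _ => abs_nonneg _) hs'.le
  have hε : 0 ≤ ε := by linarith [norm2_nonneg (A *ᵥ h)]
  obtain ⟨T₁, hT₁, hT₁card, hT₁top⟩ := exists_subset_card_eq_min_forall_abs_le h hs T₀ᶜ
  have hT₁s : #T₁ ≤ s := hT₁card ▸ min_le_left _ _
  set U := T₀ᶜ \ T₁
  have hT₀T₁ : Disjoint T₀ T₁ := disjoint_of_subset_right hT₁ disjoint_compl_right
  have hT₀U : Disjoint T₀ U := disjoint_of_subset_right sdiff_subset disjoint_compl_right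
  have hT₁U : Disjoint T₁ U := disjoint_sdiff
  have hT₀₁U : Disjoint (T₀ ∪ T₁) U := disjoint_union_left.mpr ⟨hT₀U, hT₁U⟩
  have hsplit : h = restr (T₀ ∪ T₁) h + restr U h := by
    rw [← restr_union hT₀₁U, union_assoc, union_sdiff_of_subset hT₁, union_compl]
    exact (restr_eq_self (subset_univ _)).symm
  set X := norm2 (restr (T₀ ∪ T₁) h)
  have hX : 0 ≤ X := norm2_nonneg _
  have hc0 : 0 ≤ (∑ i ∈ T₁, |h i|) / s :=
    div_nonneg (sum_nonneg fun _ _ => abs_nonneg _) (Nat.cast_nonneg _)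
  -- the blocks after `T₀ ∪ T₁` are controlled through the cone condition
  have hblocks :
      √(s : ℝ) * ((∑ i ∈ T₁, |h i|) / s) + (∑ i ∈ U, |h i|) / √(s : ℝ) ≤ X + 2 * E := by
    rw [sqrt_mul_div_self_eq_div_sqrt, ← add_div, add_comm, sum_sdiff hT₁]
    calc (∑ i ∈ T₀ᶜ, |h i|) / √(s : ℝ)
        ≤ (√(s : ℝ) * norm2 (restr T₀ h) + 2 * ∑ i ∈ T₀ᶜ, |β i|) / √(s : ℝ) := by
          refine div_le_div_of_nonneg_right ?_ hs'.le
          exact (sum_compl_abs_sub_le_of_sum_abs_le hl1 T₀).trans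
            (add_le_add (sum_abs_le_sqrt_card_mul_norm2_restr T₀ h) le_rfl)
      _ = norm2 (restr T₀ h) + 2 * E := by simp only [E]; field_simp
      _ ≤ X + 2 * E := by gcongr; exact norm2_restr_le_of_subset subset_union_left h
  have htail : norm2 (restr U h) ≤ X + 2 * E := by
    have := le_of_forall_block_le h hs (fun B => norm2 (restr B h)) zero_le_one U
      (fun B _ C _ hBC => by rw [restr_union hBC]; exact norm2_add_le _ _)
      (fun B _ _ => (one_mul _).ge) hc0 hT₁top
    rw [one_mul] at this
    exact this.trans hblocks
  have hinner := hA.abs_dotProduct_mulVec_restr_union_le h hs hS le_rfl hT₁s hT₀T₁ hT₀U hT₁U hc0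
    hT₁top
  have hcard : #(spt (restr (T₀ ∪ T₁) h)) ≤ 2 * S :=
    (card_spt_restr_le _ _).trans ((card_union_le T₀ T₁).trans (by omega))
  have hquad := hA.mul_sq_norm2_le hcard (restr U h)
  rw [← hsplit] at hquad
  have hquad' : (1 - δ) * X ^ 2 ≤ √(1 + δ) * X * (2 * ε) + √2 * δ * X * (X + 2 * E) := by
    refine hquad.trans (add_le_add (mul_le_mul_of_nonneg_left hAh (by positivity)) ?_)
    exact hinner.trans (mul_le_mul_of_nonneg_left hblocks
      (mul_nonneg (mul_nonneg (Real.sqrt_nonneg 2) hA.1) hX))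
  calc norm2 h = norm2 (restr (T₀ ∪ T₁) h + restr U h) := by rw [← hsplit]
    _ ≤ X + norm2 (restr U h) := norm2_add_le _ _
    _ ≤ 2 * X + 2 * E := by linarith
    _ ≤ C1 δ * ε + C2 δ * E := two_mul_add_le_C1_mul_add_C2_mul hA.1 hδ hε hE hX hquad'
    _ = C1 δ * ε + C2 δ * (∑ i ∈ T₀ᶜ, |β i|) / √(s : ℝ) := by rw [mul_div_assoc]

end L1Recovery

theorem ModCS.norm2_sub_le {n m : ℕ} {A : Matrix (Fin n) (Fin m) ℝ} {S : ℕ} {δ : ℝ}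
    (hA : RIPBound A (2 * S) δ) (hδ : (√2 + 1) * δ < 1) {y : Fin n → ℝ} {ε : ℝ}
    {β' β : Fin m → ℝ} (hβ' : ModCS A y ε ∅ β') (hβ : norm2 (y - A *ᵥ β) ≤ ε)
    {T₀ : Finset (Fin m)} (hT₀ : T₀.Nonempty) (hS : #T₀ ≤ S) :
    norm2 (β' - β) ≤ C1 δ * ε + C2 δ * (∑ i ∈ T₀ᶜ, |β i|) / √(#T₀ : ℝ) := by
  refine hA.norm2_sub_le_of_sum_abs_le hδ ?_ (by simpa using hβ'.2 β hβ) hT₀ hS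
  have hAh : A *ᵥ (β' - β) = (y - A *ᵥ β) - (y - A *ᵥ β') := by
    rw [mulVec_sub]; abel
  rw [hAh, two_mul]
  exact (_root_.norm2_sub_le _ _).trans (add_le_add hβ hβ'.1)

section LeastSquares

variable {n m : ℕ} {A : Matrix (Fin n) (Fin m) ℝ}

lemma IsLS.dotProduct_mulVec_eq_zero {y : Fin n → ℝ} {T : Finset (Fin m)} {xhat : Fin m → ℝ}
    (hLS : IsLS A y T xhat) {u : Fin m → ℝ} (hu : spt u ⊆ T) :
    (A *ᵥ u) ⬝ᵥ (y - A *ᵥ xhat) = 0 := by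
  rw [dotProduct_comm, dotProduct_mulVec]
  refine sum_eq_zero fun i _ => ?_
  by_cases hi : i ∈ T
  · have := hLS.2 i hi
    simp only [vecMul, dotProduct, Pi.sub_apply] at this ⊢
    rw [show ∑ j, (y j - (A *ᵥ xhat) j) * A j i = 0 by
      rw [← this]; exact sum_congr rfl fun j _ => mul_comm _ _, zero_mul]
  · rw [not_not.mp fun hui => hi (hu (mem_spt.mpr hui)), mul_zero]

lemma le_two_mul_add_sqrt_two_mul {δ' r a p ε : ℝ} (hδ' : δ' < 1 / 2) (ha : 0 ≤ a)
    (hp : 0 ≤ p) (hε : 0 ≤ ε) (hlow : (1 - δ') * r ^ 2 ≤ a ^ 2) (hquad : a ^ 2 ≤ p * r + a * ε) :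
    r ≤ 2 * p + √2 * ε := by
  set t := √(1 - δ')
  have ht2 : t ^ 2 = 1 - δ' := Real.sq_sqrt (by linarith)
  have ht : 0 < t := Real.sqrt_pos.mpr (by linarith)
  have htr : t * r ≤ a := abs_le_of_sq_le_sq' (by rw [mul_pow, ht2]; exact hlow) ha |>.2
  have hta : t * a ≤ p + t * ε := by
    rcases ha.eq_or_lt with rfl | hapos
    · nlinarith
    · refine le_of_mul_le_mul_right ?_ hapos
      nlinarith
  have hts : 1 ≤ t * √2 := by
    rw [← Real.sqrt_mul (by linarith), Real.one_le_sqrt]; linarith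
  refine le_of_mul_le_mul_left ?_ (by positivity : 0 < t ^ 2)
  nlinarith [mul_le_mul_of_nonneg_left htr ht.le,
    mul_le_mul_of_nonneg_left hts (mul_nonneg ht.le hε)]

theorem RIPBound.norm2_le_of_dotProduct_mulVec_eq_zero {S S' : ℕ} {δ' θ ε : ℝ}
    (hA : RIPBound A S δ') (hδ' : δ' < 1 / 2) (hθ : ROBound A S S' θ) {g z : Fin m → ℝ}
    {w : Fin n → ℝ} (hg : #(spt g) ≤ S) (hz : #(spt z) ≤ S') (hgz : Disjoint (spt g) (spt z))
    (hw : norm2 w ≤ ε) (horth : (A *ᵥ g) ⬝ᵥ (A *ᵥ g + A *ᵥ z + w) = 0) :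
    norm2 g ≤ 2 * θ * norm2 z + √2 * ε := by
  have hro : |(A *ᵥ g) ⬝ᵥ (A *ᵥ z)| ≤ θ * norm2 g * norm2 z := hθ.2 g z hgz hg hz
  have hw' := abs_dotProduct_le_norm2_mul (A *ᵥ g) w
  rw [dotProduct_add, dotProduct_add, ← sq_norm2_eq_dotProduct] at horth
  have hquad : norm2 (A *ᵥ g) ^ 2 ≤ θ * norm2 z * norm2 g + norm2 (A *ᵥ g) * ε := by
    nlinarith [neg_abs_le ((A *ᵥ g) ⬝ᵥ (A *ᵥ z)), neg_abs_le ((A *ᵥ g) ⬝ᵥ w), norm2_nonneg (A *ᵥ g)]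
  have := le_two_mul_add_sqrt_two_mul hδ' (norm2_nonneg _)
    (mul_nonneg hθ.1 (norm2_nonneg z)) ((norm2_nonneg w).trans hw) (hA.le_sq_norm2_mulVec hg) hquad
  linarith

end LeastSquares

lemma C2_nonneg {δ : ℝ} (hδ0 : 0 ≤ δ) (hδ : (√2 + 1) * δ < 1) : 0 ≤ C2 δ := by
  have : 0 ≤ (√2 - 1) * δ := mul_nonneg (by linarith [Real.one_lt_sqrt_two]) hδ0
  exact div_nonneg (by linarith) (by linarith)

section DetectionCondition

variable {n m : ℕ} {A : Matrix (Fin n) (Fin m) ℝ}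

lemma sub_eq_restr_add_restr_sdiff {T : Finset (Fin m)} {x xhat : Fin m → ℝ}
    (hxhat : ∀ i, i ∉ T → xhat i = 0) : x - xhat = restr T (x - xhat) + restr (spt x \ T) x := by
  funext i
  by_cases hiT : i ∈ T
  · simp [restr, hiT]
  · by_cases hx : x i = 0 <;> simp [restr, hiT, hx, hxhat i hiT, mem_spt]

lemma sum_abs_compl_sdiff_le {T : Finset (Fin m)} {x xhat : Fin m → ℝ}
    (hxhat : ∀ i, i ∉ T → xhat i = 0) :
    ∑ i ∈ (spt x \ T)ᶜ, |(x - xhat) i| ≤ √(#T : ℝ) * norm2 (restr T (x - xhat)) := by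
  refine le_trans ?_ (sum_abs_le_sqrt_card_mul_norm2_restr T _)
  rw [← sum_subset (s₁ := (spt x \ T)ᶜ ∩ T) inter_subset_left fun i hi hiT => ?_]
  · exact sum_le_sum_of_subset_of_nonneg inter_subset_right fun _ _ _ => abs_nonneg _
  · have hiT : i ∉ T := fun h => hiT (mem_inter.mpr ⟨hi, h⟩)
    have hx : x i = 0 := by
      by_contra hx
      exact mem_compl.mp hi (mem_sdiff.mpr ⟨mem_spt.mpr hx, hiT⟩)
    simp [hx, hxhat i hiT]

theorem IsLS.norm2_restr_sub_le {ST SΔ : ℕ} {δ' θ ε : ℝ} (hRIP' : RIPBound A ST δ')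
    (hδ' : δ' < 1 / 2) (hθ : ROBound A ST SΔ θ) {x xinit : Fin m → ℝ} {w : Fin n → ℝ}
    {T : Finset (Fin m)} (hT : #T ≤ ST) (hΔ : #(spt x \ T) ≤ SΔ) (hw : norm2 w ≤ ε)
    (hinit : IsLS A (A *ᵥ x + w) T xinit) :
    norm2 (restr T (x - xinit)) ≤ 2 * θ * norm2 (restr (spt x \ T) x) + √2 * ε := by
  refine hRIP'.norm2_le_of_dotProduct_mulVec_eq_zero hδ' hθ ((card_spt_restr_le _ _).trans hT)
    ((card_spt_restr_le _ _).trans hΔ)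
    (disjoint_of_subset_left (spt_restr_subset _ _)
      (disjoint_of_subset_right (spt_restr_subset _ _) disjoint_sdiff)) hw ?_
  convert hinit.dotProduct_mulVec_eq_zero (spt_restr_subset T (x - xinit)) using 2
  rw [← mulVec_add, ← sub_eq_restr_add_restr_sdiff hinit.1, mulVec_sub]
  abel

theorem norm2_lscs_estimate_sub_le {x xinit betahat : Fin m → ℝ} {w : Fin n → ℝ} {ε δ δ' θ : ℝ}
    {T : Finset (Fin m)} {ST SΔ : ℕ} (hw : norm2 w ≤ ε) (hne : (spt x \ T).Nonempty)
    (hT : #T ≤ ST) (hΔ : #(spt x \ T) ≤ SΔ) (hδ0 : 0 ≤ δ) (hδ : (√2 + 1) * δ < 1)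
    (hRIP : RIPBound A (2 * SΔ) δ) (hδ' : δ' < 1 / 2) (hRIP' : RIPBound A ST δ')
    (hθ : ROBound A ST SΔ θ) (hinit : IsLS A (A *ᵥ x + w) T xinit)
    (hbeta : ModCS A (A *ᵥ x + w - A *ᵥ xinit) ε ∅ betahat) :
    norm2 (xinit + betahat - x) ≤
      (C1 δ + √2 * C2 δ * √((ST : ℝ) / #(spt x \ T))) * ε +
        θ * (2 * C2 δ * √(ST : ℝ)) * norm2 (restr (spt x \ T) x) := by
  set Δ := spt x \ T
  set X := norm2 (restr Δ x)
  have hfeas : norm2 (A *ᵥ x + w - A *ᵥ xinit - A *ᵥ (x - xinit)) ≤ ε := by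
    rwa [mulVec_sub, show A *ᵥ x + w - A *ᵥ xinit - (A *ᵥ x - A *ᵥ xinit) = w by abel]
  have hcs := hbeta.norm2_sub_le hRIP hδ hfeas hne hΔ
  have hl1 := (sum_abs_compl_sdiff_le hinit.1).trans (mul_le_mul_of_nonneg_left
    (hinit.norm2_restr_sub_le hRIP' hδ' hθ hT hΔ hw) (Real.sqrt_nonneg (#T : ℝ)))
  have hST : √(#T : ℝ) ≤ √(ST : ℝ) := Real.sqrt_le_sqrt (by exact_mod_cast hT)
  have hΔ1 : 1 ≤ √(#Δ : ℝ) := Real.one_le_sqrt.mpr (by exact_mod_cast card_pos.mpr hne)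
  have hC2 := C2_nonneg hδ0 hδ
  have hθX : 0 ≤ θ * (2 * C2 δ * √(ST : ℝ)) * X :=
    mul_nonneg (mul_nonneg hθ.1 (by positivity)) (norm2_nonneg _)
  calc norm2 (xinit + betahat - x) = norm2 (betahat - (x - xinit)) := by congr 1; abel
    _ ≤ C1 δ * ε + C2 δ * (√(ST : ℝ) * (2 * θ * X + √2 * ε)) / √(#Δ : ℝ) := by
      refine hcs.trans (add_le_add le_rfl (div_le_div_of_nonneg_right
        (mul_le_mul_of_nonneg_left (hl1.trans (mul_le_mul_of_nonneg_right hST ?_)) hC2)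
        (Real.sqrt_nonneg _)))
      exact add_nonneg (mul_nonneg (mul_nonneg zero_le_two hθ.1) (norm2_nonneg _))
        (mul_nonneg (Real.sqrt_nonneg 2) ((norm2_nonneg w).trans hw))
    _ = (C1 δ + √2 * C2 δ * √((ST : ℝ) / #Δ)) * ε +
        θ * (2 * C2 δ * √(ST : ℝ)) * X / √(#Δ : ℝ) := by
      rw [Real.sqrt_div' _ (Nat.cast_nonneg _)]
      ring
    _ ≤ (C1 δ + √2 * C2 δ * √((ST : ℝ) / #Δ)) * ε + θ * (2 * C2 δ * √(ST : ℝ)) * X := by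
      gcongr
      exact div_le_self hθX hΔ1

end DetectionCondition

theorem lscs_detection_condition_general {n m : ℕ} (A : Matrix (Fin n) (Fin m) ℝ)
    (x : Fin m → ℝ) (w : Fin n → ℝ) (ε δ δ' θ γ κ b αadd : ℝ) (T : Finset (Fin m))
    (ST SΔ SΔ1 : ℕ)
    (hw : norm2 w ≤ ε)
    (hne : (spt x \ T).Nonempty)
    (hT : T.card ≤ ST)
    (hΔ : (spt x \ T).card ≤ SΔ)
    (hb : b = (spt x \ T).sup' hne (fun i => |x i|))
    (hΔ1 : ((spt x \ T).filter (fun i => γ * b ≤ |x i|)).card ≤ SΔ1)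
    (hΔ2 : norm2 (restr ((spt x \ T) \ ((spt x \ T).filter (fun i => γ * b ≤ |x i|))) x) ≤ κ * b)
    (hδ : δ < (Real.sqrt 2 - 1) / 2)
    (hRIP : RIPBound A (2 * SΔ) δ)
    (hδ' : δ' < 1 / 2)
    (hRIP' : RIPBound A ST δ')
    (hθ : ROBound A ST SΔ θ)
    (xinit : Fin m → ℝ)
    (hinit : IsLS A (fun j => (A.mulVec x) j + w j) T xinit)
    (betahat : Fin m → ℝ)
    (hbeta : ModCS A
      (fun j => ((A.mulVec x) j + w j) - (A.mulVec xinit) j) ε (∅ : Finset (Fin m)) betahat)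
    (hdet : αadd + (C1 δ + Real.sqrt 2 * C2 δ *
        Real.sqrt ((ST : ℝ) / ((spt x \ T).card : ℝ))) * ε <
      (γ - θ * (2 * C2 δ * Real.sqrt (ST : ℝ)) * (Real.sqrt (SΔ1 : ℝ) + κ)) * b) :
    ∀ i ∈ (spt x \ T).filter (fun i => γ * b ≤ |x i|), αadd < |xinit i + betahat i| := by
  intro i hi
  have hδ0 : 0 ≤ δ := hRIP.1
  have hδ1 : (√2 + 1) * δ < 1 := by nlinarith [Real.sq_sqrt zero_le_two, Real.one_lt_sqrt_two]
  have hbx : ∀ j ∈ spt x \ T, |x j| ≤ b := fun j hj => hb ▸ le_sup' (fun i => |x i|) hj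
  have hxΔ := norm2_restr_le_of_subset_of_abs_le (filter_subset _ _)
    ((abs_nonneg _).trans (hbx _ hne.choose_spec)) (fun j hj => hbx j (mem_filter.mp hj).1) hΔ1 hΔ2
  have herr := norm2_lscs_estimate_sub_le hw hne hT hΔ hδ0 hδ1 hRIP hδ' hRIP' hθ hinit hbeta
  have hθC : 0 ≤ θ * (2 * C2 δ * √(ST : ℝ)) :=
    mul_nonneg hθ.1 (mul_nonneg (mul_nonneg zero_le_two (C2_nonneg hδ0 hδ1)) (Real.sqrt_nonneg _))
  have hcoord : |x i| ≤ |xinit i + betahat i| + norm2 (xinit + betahat - x) := by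
    have := abs_le_norm2 (xinit + betahat - x) i
    rw [Pi.sub_apply, Pi.add_apply, abs_sub_comm] at this
    linarith [abs_sub_abs_le_abs_sub (x i) (xinit i + betahat i)]
  nlinarith [mul_le_mul_of_nonneg_left hxΔ hθC, (mem_filter.mp hi).2]

/-- detection condition for LS-CS (Lemma 9). -/
theorem lscs_detection_condition {n m : ℕ} (A : Matrix (Fin n) (Fin m) ℝ)
    (x : Fin m → ℝ) (w : Fin n → ℝ) (ε δ δ' θ γ κ b αadd : ℝ) (T : Finset (Fin m))
    (ST SΔ SΔ1 : ℕ)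
    (hw : norm2 w ≤ ε)
    (hne : (spt x \ T).Nonempty)
    (hT : T.card ≤ ST)
    (hΔ : (spt x \ T).card ≤ SΔ)
    (hb : b = (spt x \ T).sup' hne (fun i => |x i|))
    (hγ0 : 0 < γ) (hγ1 : γ ≤ 1)
    (hΔ1 : ((spt x \ T).filter (fun i => γ * b ≤ |x i|)).card ≤ SΔ1)
    (hΔ2 : norm2 (restr ((spt x \ T) \ ((spt x \ T).filter (fun i => γ * b ≤ |x i|))) x) ≤ κ * b)
    (hδ : δ < (Real.sqrt 2 - 1) / 2)
    (hRIP : RIPBound A (2 * SΔ) δ)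
    (hδ' : δ' < 1 / 2)
    (hRIP' : RIPBound A ST δ')
    (hθ : ROBound A ST SΔ θ)
    (xinit : Fin m → ℝ)
    (hinit : IsLS A (fun j => (A.mulVec x) j + w j) T xinit)
    (betahat : Fin m → ℝ)
    (hbeta : ModCS A
      (fun j => ((A.mulVec x) j + w j) - (A.mulVec xinit) j) ε (∅ : Finset (Fin m)) betahat)
    (hθC : θ * (2 * C2 δ * Real.sqrt (ST : ℝ)) ≤ γ / (2 * (Real.sqrt (SΔ1 : ℝ) + κ)))
    (hdet : αadd + (C1 δ + Real.sqrt 2 * C2 δ *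
        Real.sqrt ((ST : ℝ) / ((spt x \ T).card : ℝ))) * ε <
      (γ - θ * (2 * C2 δ * Real.sqrt (ST : ℝ)) * (Real.sqrt (SΔ1 : ℝ) + κ)) * b) :
    ∀ i ∈ (spt x \ T).filter (fun i => γ * b ≤ |x i|), αadd < |xinit i + betahat i| :=
  lscs_detection_condition_general A x w ε δ δ' θ γ κ b αadd T ST SΔ SΔ1 hw hne hT hΔ hb hΔ1 hΔ2 hδ
    hRIP hδ' hRIP' hθ xinit hinit betahat hbeta hdet
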